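/- arXiv:2505.22750 — 4 statements merged into one kernel-verified Lean document; each statement's English description precedes it below -/
import Mathlib

section
/- Let H be a real Hilbert space, K ⊆ H nonempty closed convex, a : H × H → ℝ a continuous symmetric bilinear form with a(w,w) ≥ λ‖w‖² for some λ > 0 and all w in the set of differences K − K, and b ∈ H. Then the functional Q(w) = (1/2)a(w,w) + ⟨b,w⟩ has a unique minimizer over K. -/
/-!
`Q` is `lam`-strongly convex on `K`: for a convex combination, `Q` falls below the chord by
`s t a(x - y, x - y) / 2 ≥ s t lam ‖x - y‖² / 2`, and only differences of points of `K` occur.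
Strong convexity makes every minimizing sequence Cauchy (compare each pair of its terms with their
midpoint), so by completeness and closedness it converges in `K`, to a minimizer by continuity.
The infimum is finite since `Q` grows quadratically away from any fixed point of `K`, and
uniqueness is strict convexity.
-/

open scoped RealInnerProductSpace

open Filter Topology

section StrongConvex

variable {E : Type*} [NormedAddCommGroup E] [NormedSpace ℝ E] {s : Set E} {m c : ℝ} {f : E → ℝ}

lemma StrongConvexOn.norm_sub_sq_le (hf : StrongConvexOn s m f) (hc : ∀ z ∈ s, c ≤ f z)
    {x y : E} (hx : x ∈ s) (hy : y ∈ s) : m / 8 * ‖x - y‖ ^ 2 ≤ (f x + f y) / 2 - c := by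
  have half : (0 : ℝ) ≤ 1 / 2 := by norm_num
  have hmid := hf.2 hx hy half half (add_halves 1)
  have hlow := hc _ (hf.1 hx hy half half (add_halves 1))
  simp only [smul_eq_mul] at hmid
  linarith

lemma StrongConvexOn.cauchySeq_of_tendsto (hf : StrongConvexOn s m f) (hm : 0 < m)
    (hc : ∀ z ∈ s, c ≤ f z) {u : ℕ → E} (hu : ∀ n, u n ∈ s)
    (hlim : Tendsto (f ∘ u) atTop (𝓝 c)) : CauchySeq u := by
  rw [Metric.cauchySeq_iff]
  intro ε hε
  have hδ : c < c + m * ε ^ 2 / 8 := by have := mul_pos hm (pow_pos hε 2); linarith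
  obtain ⟨N, hN⟩ := eventually_atTop.1 (hlim.eventually (gt_mem_nhds hδ))
  refine ⟨N, fun p hp q hq => ?_⟩
  have hpq := hf.norm_sub_sq_le hc (hu p) (hu q)
  have hp' := hN p hp
  have hq' := hN q hq
  simp only [Function.comp] at hp' hq'
  have hsq : ‖u p - u q‖ ^ 2 < ε ^ 2 := by
    have : m * ‖u p - u q‖ ^ 2 < m * ε ^ 2 := by linarith
    exact lt_of_mul_lt_mul_left this hm.le
  rw [dist_eq_norm]
  exact lt_of_pow_lt_pow_left₀ 2 hε.le hsq

theorem StrongConvexOn.existsUnique_isMinOn [CompleteSpace E] (hf : StrongConvexOn s m f)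
    (hm : 0 < m) (hs : IsClosed s) (hne : s.Nonempty) (hcont : ContinuousOn f s)
    (hbdd : BddBelow (f '' s)) : ∃! x, x ∈ s ∧ IsMinOn f s x := by
  set c := sInf (f '' s)
  have hc : ∀ z ∈ s, c ≤ f z := fun z hz => csInf_le hbdd (Set.mem_image_of_mem f hz)
  obtain ⟨v, -, hv, hvs⟩ := exists_seq_tendsto_sInf (hne.image f) hbdd
  choose u hu hfu using hvs
  have hfu' : f ∘ u = v := funext hfu
  obtain ⟨z, hz⟩ := cauchySeq_tendsto_of_complete
    (hf.cauchySeq_of_tendsto hm hc hu (hfu' ▸ hv))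
  have hzs : z ∈ s := hs.mem_of_tendsto hz (Eventually.of_forall hu)
  have hfz : f z = c := tendsto_nhds_unique
    ((hcont z hzs).tendsto.comp (tendsto_nhdsWithin_iff.2 ⟨hz, Eventually.of_forall hu⟩))
    (hfu' ▸ hv)
  have hzmin : IsMinOn f s z := fun y hy => hfz ▸ hc y hy
  exact ⟨z, ⟨hzs, hzmin⟩, fun y ⟨hy, hymin⟩ =>
    (hf.strictConvexOn hm).eq_of_isMinOn hymin hzmin hy hzs⟩

lemma bddBelow_image_of_quadratic_growth (ℓ : E →L[ℝ] ℝ) (hm : 0 < m) {x₀ : E}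
    (hgrowth : ∀ x ∈ s, f x₀ + ℓ (x - x₀) + m / 2 * ‖x - x₀‖ ^ 2 ≤ f x) :
    BddBelow (f '' s) := by
  refine ⟨f x₀ - ‖ℓ‖ ^ 2 / (2 * m), ?_⟩
  rintro _ ⟨x, hx, rfl⟩
  have hℓ : -(‖ℓ‖ * ‖x - x₀‖) ≤ ℓ (x - x₀) := (abs_le.1 (ℓ.le_opNorm _)).1
  have hsq : ‖ℓ‖ * ‖x - x₀‖ - m / 2 * ‖x - x₀‖ ^ 2 ≤ ‖ℓ‖ ^ 2 / (2 * m) := by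
    rw [le_div_iff₀ (by positivity)]
    nlinarith [sq_nonneg (m * ‖x - x₀‖ - ‖ℓ‖)]
  linarith [hgrowth x hx]

end StrongConvex

section Quadratic

variable {H : Type*} [NormedAddCommGroup H] [InnerProductSpace ℝ H]
  (a : H →L[ℝ] H →L[ℝ] ℝ) (b : H) {K : Set H} {lam : ℝ}

lemma bilinear_apply_smul_add_smul {s t : ℝ} (hst : s + t = 1) (x y : H) :
    a (s • x + t • y) (s • x + t • y) = s * a x x + t * a y y - s * t * a (x - y) (x - y) := by
  simp only [map_add, map_smul, map_sub, add_apply, smul_apply, sub_apply, smul_eq_mul]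
  obtain rfl := eq_sub_of_add_eq hst
  ring

lemma strongConvexOn_quadratic (hK : Convex ℝ K)
    (hcoerc : ∀ u ∈ K, ∀ v ∈ K, lam * ‖u - v‖ ^ 2 ≤ a (u - v) (u - v)) :
    StrongConvexOn K lam (fun w => (1 / 2) * a w w + ⟪b, w⟫) := by
  refine ⟨hK, fun x hx y hy s t hs ht hst => ?_⟩
  have := mul_le_mul_of_nonneg_left (hcoerc x hx y hy) (mul_nonneg hs ht)
  simp only [bilinear_apply_smul_add_smul a hst, inner_add_right, real_inner_smul_right,
    smul_eq_mul]
  obtain rfl := eq_sub_of_add_eq hst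
  nlinarith

lemma bddBelow_image_quadratic {x₀ : H} (hx₀ : x₀ ∈ K) (hlam : 0 < lam)
    (hcoerc : ∀ u ∈ K, ∀ v ∈ K, lam * ‖u - v‖ ^ 2 ≤ a (u - v) (u - v)) :
    BddBelow ((fun w => (1 / 2) * a w w + ⟪b, w⟫) '' K) := by
  -- the linear functional below is the derivative of `Q` at `x₀`
  refine bddBelow_image_of_quadratic_growth
    ((1 / 2 : ℝ) • (a x₀ + a.flip x₀) + innerSL ℝ b) hlam (x₀ := x₀) fun x hx => ?_
  have hexpand : (1 / 2) * a x x + ⟪b, x⟫ = (1 / 2) * a x₀ x₀ + ⟪b, x₀⟫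
      + ((1 / 2 : ℝ) • (a x₀ + a.flip x₀) + innerSL ℝ b) (x - x₀)
      + 1 / 2 * a (x - x₀) (x - x₀) := by
    simp only [map_sub, add_apply, smul_apply, sub_apply, ContinuousLinearMap.flip_apply,
      innerSL_apply_apply, smul_eq_mul]
    ring
  linarith [hcoerc x hx x₀ hx₀]

end Quadratic

theorem stmt_1_general {H : Type*} [NormedAddCommGroup H] [InnerProductSpace ℝ H] [CompleteSpace H]
    (K : Set H) (hKne : K.Nonempty) (hKc : IsClosed K) (hKconv : Convex ℝ K)
    (a : H →L[ℝ] H →L[ℝ] ℝ)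
    (lam : ℝ) (hlam : 0 < lam)
    (hcoerc : ∀ u ∈ K, ∀ v ∈ K, lam * ‖u - v‖ ^ 2 ≤ a (u - v) (u - v))
    (b : H) :
    ∃! u, u ∈ K ∧ IsMinOn (fun w => (1 / 2) * a w w + ⟪b, w⟫) K u := by
  obtain ⟨x₀, hx₀⟩ := hKne
  have hcont : Continuous (fun w => (1 / 2) * a w w + ⟪b, w⟫) := by fun_prop
  exact (strongConvexOn_quadratic a b hKconv hcoerc).existsUnique_isMinOn hlam hKc ⟨x₀, hx₀⟩
    hcont.continuousOn (bddBelow_image_quadratic a b hx₀ hlam hcoerc)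

theorem stmt_1 {H : Type*} [NormedAddCommGroup H] [InnerProductSpace ℝ H] [CompleteSpace H]
    (K : Set H) (hKne : K.Nonempty) (hKc : IsClosed K) (hKconv : Convex ℝ K)
    (a : H →L[ℝ] H →L[ℝ] ℝ) (hsymm : ∀ x y, a x y = a y x)
    (lam : ℝ) (hlam : 0 < lam)
    (hcoerc : ∀ u ∈ K, ∀ v ∈ K, lam * ‖u - v‖ ^ 2 ≤ a (u - v) (u - v))
    (b : H) :
    ∃! u, u ∈ K ∧ IsMinOn (fun w => (1 / 2) * a w w + ⟪b, w⟫) K u :=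
  stmt_1_general K hKne hKc hKconv a lam hlam hcoerc b
end

section
/- Let (X, μ) be a finite measure space, κ > 0, α ≤ β extended reals, and Uad = {u ∈ L²(X) : α ≤ u ≤ β a.e.}. Suppose ū ∈ Uad and Φ(ū) ∈ L²(X) satisfy ∫_X (Φ(ū) + κū)(u − ū) dμ ≥ 0 for all u ∈ Uad. Then ū(x) = proj_{[α,β]}(−Φ(ū)(x)/κ) for a.e. x ∈ X, where proj_{[α,β]} denotes the projection onto the interval [α,β]. -/
open MeasureTheory
open scoped ENNReal

private lemma pointwise_proj {α β : EReal} (hαβ : α ≤ β) {u t : ℝ}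
    (h1 : α ≤ (u : EReal)) (h2 : (u : EReal) ≤ β)
    (H : ∀ q : ℚ, α ≤ (((q : ℝ)) : EReal) → (((q : ℝ)) : EReal) ≤ β →
      0 ≤ (u - t) * ((q : ℝ) - u)) :
    (u : EReal) = max α (min β (t : EReal)) := by
  rcases lt_trichotomy u t with hut | hut | hut
  · have hβu : β ≤ (u : EReal) := by
      by_contra hc
      push_neg at hc
      obtain ⟨q, hq1, hq2⟩ := EReal.exists_rat_btwn_of_lt hc
      have hα : α ≤ (((q : ℝ)) : EReal) := le_trans h1 (le_of_lt hq1)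
      have hmain := H q hα hq2.le
      have huq : u < (q : ℝ) := EReal.coe_lt_coe_iff.1 hq1
      nlinarith
    have heq : (u : EReal) = β := le_antisymm h2 hβu
    have htβ : β ≤ (t : EReal) := heq ▸ (EReal.coe_le_coe_iff.2 hut.le)
    rw [heq, min_eq_left htβ, max_eq_right hαβ]
  · subst hut
    rw [min_eq_right h2, max_eq_right h1]
  · have hαu : (u : EReal) ≤ α := by
      by_contra hc
      push_neg at hc
      obtain ⟨q, hq1, hq2⟩ := EReal.exists_rat_btwn_of_lt hc
      have hβ : (((q : ℝ)) : EReal) ≤ β := le_trans hq2.le h2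
      have hmain := H q hq1.le hβ
      have huq : (q : ℝ) < u := EReal.coe_lt_coe_iff.1 hq2
      nlinarith
    have heq : (u : EReal) = α := le_antisymm hαu h1
    have htu : (t : EReal) < (u : EReal) := EReal.coe_lt_coe_iff.2 hut
    have htβ : (t : EReal) ≤ β := le_trans (((htu.trans_eq heq).trans_le hαβ)).le le_rfl
    rw [min_eq_right htβ, max_eq_left (htu.trans_eq heq).le, heq]

theorem stmt_3 {X : Type*} [MeasurableSpace X] (μ : Measure X) [IsFiniteMeasure μ]
    (κ : ℝ) (hκ : 0 < κ) (α β : EReal) (hαβ : α ≤ β)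
    (Uad : Set (Lp ℝ 2 μ))
    (hUad : Uad = {u : Lp ℝ 2 μ | ∀ᵐ x ∂μ, α ≤ (u x : EReal) ∧ (u x : EReal) ≤ β})
    (ubar Φu : Lp ℝ 2 μ) (hubar : ubar ∈ Uad)
    (hVI : ∀ u ∈ Uad, 0 ≤ ∫ x, (Φu x + κ * ubar x) * (u x - ubar x) ∂μ) :
    ∀ᵐ x ∂μ, (ubar x : EReal) = max α (min β ((-(Φu x) / κ : ℝ) : EReal)) := by
  classical
  subst hUad
  have hubar' : ∀ᵐ x ∂μ, α ≤ (ubar x : EReal) ∧ (ubar x : EReal) ≤ β := hubar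
  rcases eq_or_lt_of_le hαβ with heq | hlt
  · subst heq
    filter_upwards [hubar'] with x hx
    rw [le_antisymm hx.2 hx.1, max_eq_left (min_le_left _ _)]
  · -- key localization step
    have key : ∀ q : ℚ, α ≤ (((q : ℝ)) : EReal) → (((q : ℝ)) : EReal) ≤ β →
        ∀ᵐ x ∂μ, 0 ≤ (Φu x + κ * ubar x) * ((q : ℝ) - ubar x) := by
      intro q hq1 hq2
      set g : X → ℝ := fun x => (Φu x + κ * ubar x) * ((q : ℝ) - ubar x) with hg
      have hp2 : MemLp (fun x => Φu x + κ * ubar x) 2 μ := by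
        have := ((Lp.memLp Φu).add ((Lp.memLp ubar).const_mul κ))
        exact this.ae_eq (Filter.Eventually.of_forall fun x => rfl)
      have hw2 : MemLp (fun x => (q : ℝ) - ubar x) 2 μ := by
        have := (memLp_const (μ := μ) (q : ℝ)).sub (Lp.memLp ubar)
        exact this.ae_eq (Filter.Eventually.of_forall fun x => rfl)
      have hgint : Integrable g μ := by
        have hi := L2.integrable_inner (𝕜 := ℝ) (hp2.toLp _) (hw2.toLp _)
        refine hi.congr ?_
        filter_upwards [hp2.coeFn_toLp, hw2.coeFn_toLp] with x h1 h2
        simp [RCLike.inner_apply, h1, h2, hg, mul_comm]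
      refine ae_nonneg_of_forall_setIntegral_nonneg hgint ?_
      intro s hs _
      have hmem : MemLp (fun x => if x ∈ s then (q : ℝ) else ubar x) 2 μ := by
        have h1 : MemLp (s.indicator fun _ => (q : ℝ)) 2 μ :=
          (memLp_const _).indicator hs
        have h2 : MemLp (sᶜ.indicator fun x => ubar x) 2 μ :=
          (Lp.memLp ubar).indicator hs.compl
        refine (h1.add h2).ae_eq (Filter.Eventually.of_forall fun x => ?_)
        by_cases hx : x ∈ s <;>
          simp [Pi.add_apply, Set.indicator_apply, hx]
      set uE : Lp ℝ 2 μ := hmem.toLp _ with huE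
      have huEmem : uE ∈ {u : Lp ℝ 2 μ | ∀ᵐ x ∂μ, α ≤ (u x : EReal) ∧ (u x : EReal) ≤ β} := by
        filter_upwards [hmem.coeFn_toLp, hubar'] with x hx hb
        rw [hx]
        by_cases hxs : x ∈ s
        · simp only [hxs, if_true]
          exact ⟨hq1, hq2⟩
        · simp only [hxs, if_false]
          exact hb
      have hVIe := hVI uE huEmem
      have heq2 : (fun x => (Φu x + κ * ubar x) * (uE x - ubar x)) =ᵐ[μ] s.indicator g := by
        filter_upwards [hmem.coeFn_toLp] with x hx
        rw [hx]
        by_cases hxs : x ∈ s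
        · simp [hxs, Set.indicator_of_mem, hg]
        · simp [hxs, Set.indicator_of_notMem]
      calc (0 : ℝ) ≤ ∫ x, (Φu x + κ * ubar x) * (uE x - ubar x) ∂μ := hVIe
        _ = ∫ x, s.indicator g x ∂μ := integral_congr_ae heq2
        _ = ∫ x in s, g x ∂μ := integral_indicator hs
    have hae : ∀ᵐ x ∂μ, ∀ q : ℚ, α ≤ (((q : ℝ)) : EReal) → (((q : ℝ)) : EReal) ≤ β →
        0 ≤ (Φu x + κ * ubar x) * ((q : ℝ) - ubar x) := by
      rw [ae_all_iff]
      intro q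
      by_cases hq1 : α ≤ (((q : ℝ)) : EReal)
      · by_cases hq2 : (((q : ℝ)) : EReal) ≤ β
        · filter_upwards [key q hq1 hq2] with x hx _ _
          exact hx
        · filter_upwards with x _ h2
          exact absurd h2 hq2
      · filter_upwards with x h1
        exact absurd h1 hq1
    filter_upwards [hae, hubar'] with x hx hb
    refine pointwise_proj hαβ hb.1 hb.2 ?_
    intro q hq1 hq2
    have h0 := hx q hq1 hq2
    have hκ' : κ ≠ 0 := ne_of_gt hκ
    have e1 : ubar x - (-(Φu x) / κ) = (Φu x + κ * ubar x) / κ := by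
      rw [add_div, mul_div_cancel_left₀ _ hκ']
      ring
    rw [e1, div_mul_eq_mul_div]
    exact div_nonneg h0 hκ.le
end

section
/- Let (X,μ) be a finite measure space, κ > 0, α < β reals, K = {u ∈ L²(X) : α ≤ u ≤ β a.e.}, and X₀ ⊆ X measurable. Let K̂ = {u ∈ K : u = ū a.e. on X₀} for a fixed ū ∈ K. Suppose v ∈ K̂ satisfies the variational inequality ∫_X (g + κv)(w − v) dμ ≥ 0 for all w ∈ K̂, where g ∈ L∞(X). Assume further that (g + κv)(x) > 0 and v(x) = α for a.e. x in a measurable set X₊ ⊆ X₀, (g + κv)(x) < 0 and v(x) = β for a.e. x in X₋ ⊆ X₀, and X₀ = X₊ ∪ X₋ (up to null sets). Then v satisfies ∫_X (g + κv)(w − v) dμ ≥ 0 for all w ∈ K. -/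
open MeasureTheory
open scoped ENNReal

private lemma l2_mul_integrable {X : Type*} [MeasurableSpace X] {μ : Measure X} {f h : X → ℝ}
    (hf : MemLp f 2 μ) (hh : MemLp h 2 μ) : Integrable (fun x => f x * h x) μ := by
  have H := L2.integrable_inner (𝕜 := ℝ) (hf.toLp f) (hh.toLp h)
  refine H.congr ?_
  filter_upwards [hf.coeFn_toLp, hh.coeFn_toLp] with x h1 h2
  simp [h1, h2, RCLike.inner_apply, mul_comm]

theorem stmt_14 {X : Type*} [MeasurableSpace X] (μ : Measure X) [IsFiniteMeasure μ]
    (κ α β : ℝ) (hκ : 0 < κ) (hαβ : α < β)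
    (X₀ Xp Xm : Set X) (hX₀ : MeasurableSet X₀) (hXp : MeasurableSet Xp)
    (hXm : MeasurableSet Xm) (hpsub : Xp ⊆ X₀) (hmsub : Xm ⊆ X₀)
    (hcover : μ (X₀ \ (Xp ∪ Xm)) = 0)
    (ubar g v : X → ℝ) (hg : MemLp g ⊤ μ)
    (hubar2 : MemLp ubar 2 μ) (hubarbd : ∀ᵐ x ∂μ, α ≤ ubar x ∧ ubar x ≤ β)
    (hv2 : MemLp v 2 μ) (hvbd : ∀ᵐ x ∂μ, α ≤ v x ∧ v x ≤ β)
    (hvhat : ∀ᵐ x ∂μ.restrict X₀, v x = ubar x)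
    (hVI : ∀ w : X → ℝ, MemLp w 2 μ → (∀ᵐ x ∂μ, α ≤ w x ∧ w x ≤ β) →
      (∀ᵐ x ∂μ.restrict X₀, w x = ubar x) →
      0 ≤ ∫ x, (g x + κ * v x) * (w x - v x) ∂μ)
    (hplus : ∀ᵐ x ∂μ.restrict Xp, 0 < g x + κ * v x ∧ v x = α)
    (hminus : ∀ᵐ x ∂μ.restrict Xm, g x + κ * v x < 0 ∧ v x = β) :
    ∀ w : X → ℝ, MemLp w 2 μ → (∀ᵐ x ∂μ, α ≤ w x ∧ w x ≤ β) →
      0 ≤ ∫ x, (g x + κ * v x) * (w x - v x) ∂μ := by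
  intro w hw2 hwbd
  set f : X → ℝ := fun x => g x + κ * v x with hf
  have hf2 : MemLp f 2 μ :=
    (hg.mono_exponent le_top).add (hv2.const_mul κ)
  -- the modified competitor
  set what : X → ℝ := X₀.indicator ubar + X₀ᶜ.indicator w with hwhat
  have hwin : ∀ x ∈ X₀, what x = ubar x := by
    intro x hx
    simp [hwhat, Set.indicator_apply, hx]
  have hwout : ∀ x ∉ X₀, what x = w x := by
    intro x hx
    simp [hwhat, Set.indicator_apply, hx]
  have hwhat2 : MemLp what 2 μ :=
    (hubar2.indicator hX₀).add (hw2.indicator hX₀.compl)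
  have hwhatbd : ∀ᵐ x ∂μ, α ≤ what x ∧ what x ≤ β := by
    filter_upwards [hubarbd, hwbd] with x h1 h2
    by_cases hx : x ∈ X₀
    · rw [hwin x hx]; exact h1
    · rw [hwout x hx]; exact h2
  have hwhat0 : ∀ᵐ x ∂μ.restrict X₀, what x = ubar x := by
    filter_upwards [self_mem_ae_restrict hX₀] with x hx
    exact hwin x hx
  have hVI' := hVI what hwhat2 hwhatbd hwhat0
  -- integrability
  have int1 : Integrable (fun x => f x * (what x - v x)) μ :=
    l2_mul_integrable hf2 (hwhat2.sub hv2)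
  have int2 : Integrable (fun x => f x * (w x - what x)) μ :=
    l2_mul_integrable hf2 (hw2.sub hwhat2)
  have hsplit : ∫ x, f x * (w x - v x) ∂μ
      = (∫ x, f x * (what x - v x) ∂μ) + ∫ x, f x * (w x - what x) ∂μ := by
    rw [← integral_add int1 int2]
    congr 1
    funext x
    ring
  -- the second integral is a set integral over X₀
  have hind : (fun x => f x * (w x - what x))
      = X₀.indicator (fun x => f x * (w x - ubar x)) := by
    funext x
    by_cases hx : x ∈ X₀
    · rw [hwin x hx, Set.indicator_of_mem hx]
    · rw [hwout x hx, Set.indicator_of_notMem hx]; ring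
  have hset : ∫ x, f x * (w x - what x) ∂μ = ∫ x in X₀, f x * (w x - v x) ∂μ := by
    rw [hind, integral_indicator hX₀]
    refine integral_congr_ae ?_
    filter_upwards [hvhat] with x hx
    rw [hx]
  -- transfer a.e. facts from restrict Xp / Xm to restrict X₀
  have habs : ∀ {s : Set X}, MeasurableSet s → ∀ {P : X → Prop},
      (∀ᵐ x ∂μ.restrict s, P x) → (∀ᵐ x ∂μ.restrict X₀, x ∈ s → P x) := by
    intro s hs P hP
    rw [ae_restrict_iff' hs] at hP
    exact ae_restrict_of_ae hP
  have hmemcover : ∀ᵐ x ∂μ.restrict X₀, x ∈ Xp ∪ Xm := by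
    rw [ae_restrict_iff' hX₀, ae_iff]
    refine measure_mono_null ?_ hcover
    intro x hx
    simp only [Set.mem_setOf_eq, Classical.not_imp] at hx
    exact ⟨hx.1, hx.2⟩
  have hpos : 0 ≤ ∫ x in X₀, f x * (w x - v x) ∂μ := by
    refine integral_nonneg_of_ae ?_
    filter_upwards [habs hXp hplus, habs hXm hminus, hmemcover,
      ae_restrict_of_ae hwbd] with x hp hm hmem hwb
    show (0:ℝ) ≤ (g x + κ * v x) * (w x - v x)
    rcases hmem with h | h
    · obtain ⟨hfpos, hva⟩ := hp h
      have h2 : 0 ≤ w x - v x := by rw [hva]; linarith [hwb.1]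
      exact mul_nonneg hfpos.le h2
    · obtain ⟨hfneg, hvb⟩ := hm h
      have h2 : w x - v x ≤ 0 := by rw [hvb]; linarith [hwb.2]
      nlinarith
  rw [hsplit, hset]
  have := hVI'
  linarith
end

section
/- Let (X,μ) be a finite measure space, κ > 0, and let T : L²(X) → L²(X) be a bounded linear operator. Fix ū, b ∈ L²(X), and suppose also that T maps L^{p_{i−1}}(X) continuously into L^{p_i}(X) for a chain 2 = p₀ ≤ p₁ ≤ … ≤ p_N ≤ ∞, and T maps L^{p_N}(X) into L^∞(X) boundedly. Let δ_a, δ_b ∈ L^∞(X) and suppose v_a, v_b ∈ L²(X) satisfy on a measurable set S ⊆ X the projection identities v(x) = proj_{[α,β]}[−(1/κ)(T(v − ū) + b − δ)(x)] (with (v,δ) = (v_a,δ_a) and (v_b,δ_b) respectively), and v_a = v_b a.e. on X∖S, and ‖v_a − v_b‖_{L²(X)} ≤ c₀‖δ_a − δ_b‖_{L^∞(X)} for some c₀ > 0. Then there exists a constant ĉ > 0, depending only on κ, c₀, μ(X), and the operator norms of T between the chain of spaces, such that ‖v_a − v_b‖_{L^∞(X)} ≤ ĉ‖δ_a − δ_b‖_{L^∞(X)}.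 -/
open MeasureTheory
open scoped ENNReal

lemma pow_max_le {a b : ℝ≥0∞} {t : ℝ} (ht : 0 ≤ t) : (a + b) ^ t ≤ 2 ^ t * (a ^ t + b ^ t) := by
  have h1 : a + b ≤ 2 * max a b := by
    rcases le_total a b with h | h
    · calc a + b ≤ b + b := by gcongr
        _ = 2 * b := (two_mul b).symm
        _ ≤ 2 * max a b := by gcongr; exact le_max_right a b
    · calc a + b ≤ a + a := by gcongr
        _ = 2 * a := (two_mul a).symm
        _ ≤ 2 * max a b := by gcongr; exact le_max_left a b
  calc (a + b) ^ t ≤ (2 * max a b) ^ t := ENNReal.rpow_le_rpow h1 ht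
    _ = 2 ^ t * (max a b) ^ t := ENNReal.mul_rpow_of_nonneg _ _ ht
    _ ≤ 2 ^ t * (a ^ t + b ^ t) := by
        gcongr
        rcases le_total a b with h | h
        · rw [max_eq_right h]; exact le_add_self
        · rw [max_eq_left h]; exact le_self_add

lemma lemB {X : Type*} [MeasurableSpace X] (μ : Measure X)
    (q : ℝ≥0∞) (hq : 1 ≤ q) (h : X → ℝ) (c e : ℝ) (hc : 0 ≤ c) (he : 0 ≤ e) :
    eLpNorm (fun x => c * (|h x| + e)) q μ ≤
      ENNReal.ofReal c * 2 * (eLpNorm h q μ + max 1 (μ Set.univ) * ENNReal.ofReal e) := by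
  have hq0 : q ≠ 0 := by positivity
  have hptw : ∀ x : X, (↑‖c * (|h x| + e)‖₊ : ℝ≥0∞)
      = ENNReal.ofReal c * ((↑‖h x‖₊ : ℝ≥0∞) + ENNReal.ofReal e) := by
    intro x
    rw [← enorm_eq_nnnorm, ← enorm_eq_nnnorm, Real.enorm_eq_ofReal (by positivity), ENNReal.ofReal_mul hc,
      ENNReal.ofReal_add (abs_nonneg _) he, Real.enorm_eq_ofReal_abs]
  rcases eq_or_ne q ⊤ with rfl | hqt
  · rw [eLpNorm_exponent_top, eLpNormEssSup]
    have hb : ∀ᵐ x ∂μ, (↑‖c * (|h x| + e)‖₊ : ℝ≥0∞)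
        ≤ ENNReal.ofReal c * (eLpNormEssSup h μ + ENNReal.ofReal e) := by
      filter_upwards [ae_le_eLpNormEssSup (f := h) (μ := μ)] with x hx
      rw [hptw x]
      gcongr
      exact hx
    calc essSup (fun x => (↑‖c * (|h x| + e)‖₊ : ℝ≥0∞)) μ
        ≤ ENNReal.ofReal c * (eLpNormEssSup h μ + ENNReal.ofReal e) := essSup_le_of_ae_le _ hb
      _ ≤ ENNReal.ofReal c * 2 * (eLpNorm h ⊤ μ + max 1 (μ Set.univ) * ENNReal.ofReal e) := by
          rw [eLpNorm_exponent_top, mul_assoc]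
          gcongr
          calc eLpNormEssSup h μ + ENNReal.ofReal e
              ≤ eLpNormEssSup h μ + max 1 (μ Set.univ) * ENNReal.ofReal e := by
                gcongr; exact le_mul_of_one_le_left zero_le (le_max_left _ _)
            _ ≤ 2 * (eLpNormEssSup h μ + max 1 (μ Set.univ) * ENNReal.ofReal e) :=
                le_mul_of_one_le_left zero_le one_le_two
  · set t := q.toReal with htdef
    have ht1 : 1 ≤ t := by
      rw [htdef, ← ENNReal.toReal_one]
      exact ENNReal.toReal_mono hqt hq
    have ht0 : 0 < t := lt_of_lt_of_le one_pos ht1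
    have hconst : (ENNReal.ofReal c) ^ t * 2 ^ t ≠ ⊤ := by
      apply ENNReal.mul_ne_top
      · exact ENNReal.rpow_ne_top_of_nonneg ht0.le ENNReal.ofReal_ne_top
      · exact ENNReal.rpow_ne_top_of_nonneg ht0.le (by norm_num)
    rw [eLpNorm_eq_lintegral_rpow_enorm_toReal hq0 hqt, eLpNorm_eq_lintegral_rpow_enorm_toReal hq0 hqt]
    simp only [enorm_eq_nnnorm]
    set A := ∫⁻ x, (↑‖h x‖₊ : ℝ≥0∞) ^ t ∂μ with hA
    calc (∫⁻ x, (↑‖c * (|h x| + e)‖₊ : ℝ≥0∞) ^ t ∂μ) ^ (1 / t)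
        ≤ (∫⁻ x, (ENNReal.ofReal c) ^ t * 2 ^ t *
            ((↑‖h x‖₊ : ℝ≥0∞) ^ t + (ENNReal.ofReal e) ^ t) ∂μ) ^ (1 / t) := by
          apply ENNReal.rpow_le_rpow _ (by positivity)
          apply lintegral_mono
          intro x
          simp only []
          rw [hptw x, ENNReal.mul_rpow_of_nonneg _ _ ht0.le, mul_assoc]
          gcongr
          exact pow_max_le ht0.le
      _ = ((ENNReal.ofReal c) ^ t * 2 ^ t * (A + μ Set.univ * (ENNReal.ofReal e) ^ t)) ^ (1 / t) := by
          rw [lintegral_const_mul' _ _ hconst, lintegral_add_right _ measurable_const,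
            lintegral_const, mul_comm (ENNReal.ofReal e ^ t)]
      _ = ENNReal.ofReal c * 2 * (A + μ Set.univ * (ENNReal.ofReal e) ^ t) ^ (1 / t) := by
          rw [ENNReal.mul_rpow_of_nonneg _ _ (by positivity : (0:ℝ) ≤ 1/t),
            ENNReal.mul_rpow_of_nonneg _ _ (by positivity : (0:ℝ) ≤ 1/t),
            ← ENNReal.rpow_mul, ← ENNReal.rpow_mul, mul_one_div_cancel ht0.ne',
            ENNReal.rpow_one, ENNReal.rpow_one]
      _ ≤ ENNReal.ofReal c * 2 * (A ^ (1/t) + (μ Set.univ * (ENNReal.ofReal e) ^ t) ^ (1/t)) := by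
          gcongr
          exact ENNReal.rpow_add_le_add_rpow _ _ (by positivity) (by
            rw [div_le_one ht0]; exact ht1)
      _ ≤ ENNReal.ofReal c * 2 * (A ^ (1/t) + max 1 (μ Set.univ) * ENNReal.ofReal e) := by
          gcongr
          rw [ENNReal.mul_rpow_of_nonneg _ _ (by positivity : (0:ℝ) ≤ 1/t),
            ← ENNReal.rpow_mul, mul_one_div_cancel ht0.ne', ENNReal.rpow_one]
          gcongr
          rcases le_total (μ Set.univ) 1 with hμ | hμ
          · exact le_trans (ENNReal.rpow_le_one hμ (by positivity)) (le_max_left _ _)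
          · refine le_trans ?_ (le_max_right _ _)
            calc μ Set.univ ^ (1/t) ≤ μ Set.univ ^ (1:ℝ) :=
                  ENNReal.rpow_le_rpow_of_exponent_le hμ (by rw [div_le_one ht0]; exact ht1)
              _ = μ Set.univ := ENNReal.rpow_one _

theorem stmt_15 {X : Type*} [MeasurableSpace X] (μ : Measure X) [IsFiniteMeasure μ]
    (κ : ℝ) (hκ : 0 < κ) (α β : ℝ) (hαβ : α ≤ β)
    (T : (X → ℝ) →ₗ[ℝ] (X → ℝ))
    (C2 : ℝ) (hT2 : ∀ f : X → ℝ, eLpNorm (T f) 2 μ ≤ ENNReal.ofReal C2 * eLpNorm f 2 μ)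
    (N : ℕ) (p : ℕ → ℝ≥0∞) (hp0 : p 0 = 2) (hpmono : ∀ i, p i ≤ p (i + 1))
    (C : ℕ → ℝ)
    (hchain : ∀ i < N, ∀ f : X → ℝ,
      eLpNorm (T f) (p (i + 1)) μ ≤ ENNReal.ofReal (C (i + 1)) * eLpNorm f (p i) μ)
    (Ctop : ℝ)
    (htop : ∀ f : X → ℝ, eLpNorm (T f) ⊤ μ ≤ ENNReal.ofReal Ctop * eLpNorm f (p N) μ)
    (ubar b : X → ℝ) (S : Set X) (hS : MeasurableSet S)
    (c₀ : ℝ) (hc₀ : 0 < c₀) :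
    ∃ chat > 0, ∀ va vb δa δb : X → ℝ,
      MemLp δa ⊤ μ → MemLp δb ⊤ μ → MemLp va 2 μ → MemLp vb 2 μ →
      (∀ᵐ x ∂μ.restrict S,
        va x = max α (min β (-(1 / κ) * (T (va - ubar) x + b x - δa x)))) →
      (∀ᵐ x ∂μ.restrict S,
        vb x = max α (min β (-(1 / κ) * (T (vb - ubar) x + b x - δb x)))) →
      (∀ᵐ x ∂μ.restrict Sᶜ, va x = vb x) →
      eLpNorm (va - vb) 2 μ ≤ ENNReal.ofReal c₀ * eLpNorm (δa - δb) ⊤ μ →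
      eLpNorm (va - vb) ⊤ μ ≤ ENNReal.ofReal chat * eLpNorm (δa - δb) ⊤ μ := by
  have hκ' : (0:ℝ) ≤ 1 / κ := by positivity
  set M : ℝ≥0∞ := max 1 (μ Set.univ) with hM
  have hMne : M ≠ ⊤ := by
    rw [hM]
    simp [measure_ne_top μ Set.univ, max_eq_iff]
  -- pointwise lemma
  have lemA : ∀ va vb δa δb : X → ℝ, MemLp δa ⊤ μ → MemLp δb ⊤ μ →
      (∀ᵐ x ∂μ.restrict S,
        va x = max α (min β (-(1 / κ) * (T (va - ubar) x + b x - δa x)))) →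
      (∀ᵐ x ∂μ.restrict S,
        vb x = max α (min β (-(1 / κ) * (T (vb - ubar) x + b x - δb x)))) →
      (∀ᵐ x ∂μ.restrict Sᶜ, va x = vb x) →
      ∀ᵐ x ∂μ, |(va - vb) x| ≤
        (1/κ) * (|T (va - vb) x| + (eLpNorm (δa - δb) ⊤ μ).toReal) := by
    intro va vb δa δb hδa hδb hpa hpb hcom
    set e := (eLpNorm (δa - δb) ⊤ μ).toReal with hedef
    have hEne : eLpNorm (δa - δb) ⊤ μ ≠ ⊤ := (hδa.sub hδb).eLpNorm_lt_top.ne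
    have he0 : 0 ≤ e := ENNReal.toReal_nonneg
    have hδbd : ∀ᵐ x ∂μ, |δa x - δb x| ≤ e := by
      filter_upwards [ae_le_eLpNormEssSup (f := δa - δb) (μ := μ)] with x hx
      have h2 : ((‖(δa - δb) x‖₊ : ℝ≥0∞)).toReal ≤ e := by
        rw [hedef, eLpNorm_exponent_top]
        exact ENNReal.toReal_mono (by rw [eLpNorm_exponent_top] at hEne; exact hEne) hx
      simpa [Real.norm_eq_abs] using h2
    have hT : T (va - ubar) - T (vb - ubar) = T (va - vb) := by
      rw [← map_sub]; exact congrArg T (sub_sub_sub_cancel_right va vb ubar)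
    have hTx : ∀ x, T (va - ubar) x - T (vb - ubar) x = T (va - vb) x := by
      intro x
      have := congrFun hT x
      simpa [Pi.sub_apply] using this
    rw [← Measure.restrict_add_restrict_compl (μ := μ) hS, ae_add_measure_iff]
    constructor
    · filter_upwards [hpa, hpb, ae_restrict_of_ae hδbd] with x ha hb' hd
      rw [Pi.sub_apply, ha, hb']
      set Aa := -(1 / κ) * (T (va - ubar) x + b x - δa x) with hAa
      set Ab := -(1 / κ) * (T (vb - ubar) x + b x - δb x) with hAb
      have h1 : |max α (min β Aa) - max α (min β Ab)| ≤ |min β Aa - min β Ab| := by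
        rw [max_comm α, max_comm α]
        exact abs_max_sub_max_le_abs _ _ _
      have h2 : |min β Aa - min β Ab| ≤ |Aa - Ab| := by
        simpa using abs_min_sub_min_le_max β Aa β Ab
      have h3 : Aa - Ab = -(1/κ) * (T (va - vb) x - (δa x - δb x)) := by
        rw [hAa, hAb, ← hTx x]; ring
      have h4 : |Aa - Ab| ≤ (1/κ) * (|T (va - vb) x| + e) := by
        rw [h3, abs_mul, abs_neg, abs_of_nonneg hκ']
        have h5 : |T (va - vb) x - (δa x - δb x)| ≤ |T (va - vb) x| + |δa x - δb x| :=
          abs_sub _ _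
        have h6 : |δa x - δb x| ≤ e := hd
        have := abs_nonneg (T (va - vb) x)
        nlinarith
      exact le_trans h1 (le_trans h2 h4)
    · filter_upwards [hcom] with x hx
      rw [Pi.sub_apply, hx, sub_self, abs_zero]
      positivity
  -- norm-level step lemma
  have step : ∀ q : ℝ≥0∞, 1 ≤ q → ∀ va vb δa δb : X → ℝ, MemLp δa ⊤ μ → MemLp δb ⊤ μ →
      (∀ᵐ x ∂μ.restrict S,
        va x = max α (min β (-(1 / κ) * (T (va - ubar) x + b x - δa x)))) →
      (∀ᵐ x ∂μ.restrict S,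
        vb x = max α (min β (-(1 / κ) * (T (vb - ubar) x + b x - δb x)))) →
      (∀ᵐ x ∂μ.restrict Sᶜ, va x = vb x) →
      eLpNorm (va - vb) q μ ≤ ENNReal.ofReal (1/κ) * 2 *
        (eLpNorm (T (va - vb)) q μ + M * eLpNorm (δa - δb) ⊤ μ) := by
    intro q hq va vb δa δb hδa hδb hpa hpb hcom
    set e := (eLpNorm (δa - δb) ⊤ μ).toReal with hedef
    have hEne : eLpNorm (δa - δb) ⊤ μ ≠ ⊤ := (hδa.sub hδb).eLpNorm_lt_top.ne
    have he0 : 0 ≤ e := ENNReal.toReal_nonneg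
    have hmono : ∀ᵐ x ∂μ, ‖(va - vb) x‖ ≤ ‖(1/κ) * (|T (va - vb) x| + e)‖ := by
      filter_upwards [lemA va vb δa δb hδa hδb hpa hpb hcom] with x hx
      rw [← hedef] at hx
      rw [Real.norm_eq_abs, Real.norm_eq_abs,
        abs_of_nonneg (mul_nonneg hκ' (add_nonneg (abs_nonneg _) he0))]
      exact hx
    calc eLpNorm (va - vb) q μ
        ≤ eLpNorm (fun x => (1/κ) * (|T (va - vb) x| + e)) q μ := eLpNorm_mono_ae hmono
      _ ≤ ENNReal.ofReal (1/κ) * 2 *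
          (eLpNorm (T (va - vb)) q μ + M * ENNReal.ofReal e) :=
          lemB μ q hq (T (va - vb)) (1/κ) e hκ' he0
      _ = ENNReal.ofReal (1/κ) * 2 *
          (eLpNorm (T (va - vb)) q μ + M * eLpNorm (δa - δb) ⊤ μ) := by
          rw [hedef, ENNReal.ofReal_toReal hEne]
  have two_le : ∀ i, (2:ℝ≥0∞) ≤ p i := by
    intro i
    induction i with
    | zero => rw [hp0]
    | succ i ih => exact le_trans ih (hpmono i)
  have one_le : ∀ i, (1:ℝ≥0∞) ≤ p i := fun i => le_trans one_le_two (two_le i)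
  have key : ∀ i, i ≤ N → ∃ D : ℝ≥0∞, D ≠ ⊤ ∧ ∀ va vb δa δb : X → ℝ,
      MemLp δa ⊤ μ → MemLp δb ⊤ μ → MemLp va 2 μ → MemLp vb 2 μ →
      (∀ᵐ x ∂μ.restrict S,
        va x = max α (min β (-(1 / κ) * (T (va - ubar) x + b x - δa x)))) →
      (∀ᵐ x ∂μ.restrict S,
        vb x = max α (min β (-(1 / κ) * (T (vb - ubar) x + b x - δb x)))) →
      (∀ᵐ x ∂μ.restrict Sᶜ, va x = vb x) →
      eLpNorm (va - vb) 2 μ ≤ ENNReal.ofReal c₀ * eLpNorm (δa - δb) ⊤ μ →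
      eLpNorm (va - vb) (p i) μ ≤ D * eLpNorm (δa - δb) ⊤ μ := by
    intro i
    induction i with
    | zero =>
      intro _
      exact ⟨ENNReal.ofReal c₀, ENNReal.ofReal_ne_top,
        fun va vb δa δb _ _ _ _ _ _ _ h8 => by rw [hp0]; exact h8⟩
    | succ i ih =>
      intro hiN
      obtain ⟨D, hDne, hD⟩ := ih (le_of_lt (Nat.lt_of_succ_le hiN))
      refine ⟨ENNReal.ofReal (1/κ) * 2 * (ENNReal.ofReal (C (i+1)) * D + M), ?_, ?_⟩
      · apply ENNReal.mul_ne_top (ENNReal.mul_ne_top ENNReal.ofReal_ne_top (by norm_num))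
        exact ENNReal.add_ne_top.2 ⟨ENNReal.mul_ne_top ENNReal.ofReal_ne_top hDne, hMne⟩
      · intro va vb δa δb hδa hδb hva hvb hpa hpb hcom h8
        calc eLpNorm (va - vb) (p (i+1)) μ
            ≤ ENNReal.ofReal (1/κ) * 2 *
              (eLpNorm (T (va - vb)) (p (i+1)) μ + M * eLpNorm (δa - δb) ⊤ μ) :=
              step (p (i+1)) (one_le (i+1)) va vb δa δb hδa hδb hpa hpb hcom
          _ ≤ ENNReal.ofReal (1/κ) * 2 *
              (ENNReal.ofReal (C (i+1)) * (D * eLpNorm (δa - δb) ⊤ μ) +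
                M * eLpNorm (δa - δb) ⊤ μ) := by
              gcongr
              calc eLpNorm (T (va - vb)) (p (i+1)) μ
                  ≤ ENNReal.ofReal (C (i+1)) * eLpNorm (va - vb) (p i) μ :=
                    hchain i (Nat.lt_of_succ_le hiN) (va - vb)
                _ ≤ ENNReal.ofReal (C (i+1)) * (D * eLpNorm (δa - δb) ⊤ μ) := by
                    gcongr
                    exact hD va vb δa δb hδa hδb hva hvb hpa hpb hcom h8
          _ = ENNReal.ofReal (1/κ) * 2 * (ENNReal.ofReal (C (i+1)) * D + M) *
                eLpNorm (δa - δb) ⊤ μ := by ring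
  obtain ⟨D, hDne, hD⟩ := key N le_rfl
  set K : ℝ≥0∞ := ENNReal.ofReal (1/κ) * 2 * (ENNReal.ofReal Ctop * D + M) with hK
  have hKne : K ≠ ⊤ := by
    rw [hK]
    apply ENNReal.mul_ne_top (ENNReal.mul_ne_top ENNReal.ofReal_ne_top (by norm_num))
    exact ENNReal.add_ne_top.2 ⟨ENNReal.mul_ne_top ENNReal.ofReal_ne_top hDne, hMne⟩
  refine ⟨K.toReal + 1, by positivity, ?_⟩
  intro va vb δa δb hδa hδb hva hvb hpa hpb hcom h8
  have hle : K ≤ ENNReal.ofReal (K.toReal + 1) := by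
    rw [ENNReal.ofReal_add ENNReal.toReal_nonneg zero_le_one, ENNReal.ofReal_toReal hKne,
      ENNReal.ofReal_one]
    exact le_self_add
  calc eLpNorm (va - vb) ⊤ μ
      ≤ ENNReal.ofReal (1/κ) * 2 *
        (eLpNorm (T (va - vb)) ⊤ μ + M * eLpNorm (δa - δb) ⊤ μ) :=
        step ⊤ le_top va vb δa δb hδa hδb hpa hpb hcom
    _ ≤ ENNReal.ofReal (1/κ) * 2 *
        (ENNReal.ofReal Ctop * (D * eLpNorm (δa - δb) ⊤ μ) + M * eLpNorm (δa - δb) ⊤ μ) := by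
        gcongr
        calc eLpNorm (T (va - vb)) ⊤ μ
            ≤ ENNReal.ofReal Ctop * eLpNorm (va - vb) (p N) μ := htop (va - vb)
          _ ≤ ENNReal.ofReal Ctop * (D * eLpNorm (δa - δb) ⊤ μ) := by
              gcongr
              exact hD va vb δa δb hδa hδb hva hvb hpa hpb hcom h8
    _ = K * eLpNorm (δa - δb) ⊤ μ := by rw [hK]; ring
    _ ≤ ENNReal.ofReal (K.toReal + 1) * eLpNorm (δa - δb) ⊤ μ := by gcongr
end
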